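/- arXiv:1306.2291 — 2 statements merged into one kernel-verified Lean document; each statement's English description precedes it below -/
import Mathlib

section
/- Optimality of parallel abstract unification in the general case: let U be a finite set of variables, let S be a set of ω-sharing groups whose supports are contained in U and which contains the empty multiset, let θ be an idempotent substitution (possibly with vars(θ) ⊄ U), let V = U ∪ vars(θ), and let S' = S ∪ { {{v}} : v ∈ vars(θ)\U } (adding a singleton multiset for each variable of θ not in U). Then for every B ∈ mgu_p(S',θ) there exist an idempotent substitution δ with vars(δ|_U) ∩ vars(θ) ⊆ U, satisfying δ⁻¹(v)|_U ∈ S for every variable v ∈ 𝒱, an idempotent most general unifier η of the set of equations Eq(δ|_U) ∪ Eq(θ), and a variable w ∈ 𝒱, such that η⁻¹(w)|_V = B. -/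
open Classical

/-- First-order terms over a signature `Sig` with arity function `ar`,
    with variables drawn from `ℕ` (a countably infinite set). -/
inductive FTerm (Sig : Type) (ar : Sig → ℕ) : Type where
  | var : ℕ → FTerm Sig ar
  | app : (f : Sig) → (Fin (ar f) → FTerm Sig ar) → FTerm Sig ar

variable {Sig : Type} {ar : Sig → ℕ}

namespace FTerm

/-- Number of occurrences of the variable `v` in a term. -/
def occ (v : ℕ) : FTerm Sig ar → ℕ
  | var w => if w = v then 1 else 0
  | app _ ts => ∑ i, occ v (ts i)

/-- Application of a substitution (a total map from variables to terms) to a term. -/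
def subst (δ : ℕ → FTerm Sig ar) : FTerm Sig ar → FTerm Sig ar
  | var v => δ v
  | app f ts => app f (fun i => (ts i).subst δ)

end FTerm

/-- Domain of a substitution. -/
def domS (θ : ℕ → FTerm Sig ar) : Set ℕ := {x | θ x ≠ FTerm.var x}

/-- Set of variables occurring in a term. -/
def varsT (t : FTerm Sig ar) : Set ℕ := {v | FTerm.occ v t ≠ 0}

/-- Range of a substitution. -/
def rngS (θ : ℕ → FTerm Sig ar) : Set ℕ := ⋃ x ∈ domS θ, varsT (θ x)

/-- Variables of a substitution. -/
def varsS (θ : ℕ → FTerm Sig ar) : Set ℕ := domS θ ∪ rngS θ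

/-- A substitution is idempotent iff its domain and range are disjoint. -/
def Idem (θ : ℕ → FTerm Sig ar) : Prop := domS θ ∩ rngS θ = ∅

/-- Multiplicity `χ(B,t)` of an ω-sharing group `B` in a term `t`. -/
def chi (B : ℕ →₀ ℕ) (t : FTerm Sig ar) : ℕ := ∑ v ∈ B.support, B v * FTerm.occ v t

/-- A parallel sharing graph for a set `S` of ω-sharing groups and an
    (idempotent) substitution `θ`.  The layers are indexed by the variables in
    the domain of `θ` (the function `layer` assigns to each edge its layer, so
    the edge sets of different layers are automatically pairwise disjoint). -/
structure PSG (Sig : Type) (ar : Sig → ℕ) (S : Set (ℕ →₀ ℕ)) (θ : ℕ → FTerm Sig ar) where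
  N : Type
  fintypeN : Fintype N
  nonemptyN : Nonempty N
  E : Type
  fintypeE : Fintype E
  layer : E → ℕ
  src : E → N
  tgt : E → N
  label : N → (ℕ →₀ ℕ)
  label_mem : ∀ n, label n ∈ S
  layer_mem : ∀ e, layer e ∈ domS θ
  out_deg : ∀ (n : N), ∀ x ∈ domS θ,
    Nat.card {e : E // layer e = x ∧ src e = n} = chi (label n) (FTerm.var x : FTerm Sig ar)
  in_deg : ∀ (n : N), ∀ x ∈ domS θ,
    Nat.card {e : E // layer e = x ∧ tgt e = n} = chi (label n) (θ x)
  conn : ∀ a b : N, Relation.ReflTransGen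
    (fun a b => ∃ e : E, (src e = a ∧ tgt e = b) ∨ (src e = b ∧ tgt e = a)) a b

attribute [instance] PSG.fintypeN PSG.fintypeE PSG.nonemptyN

/-- The resultant ω-sharing group of a parallel sharing graph. -/
noncomputable def PSG.res {S : Set (ℕ →₀ ℕ)} {θ : ℕ → FTerm Sig ar}
    (G : PSG Sig ar S θ) : ℕ →₀ ℕ := ∑ n : G.N, G.label n

/-- Parallel abstract unification. -/
def mguP (S : Set (ℕ →₀ ℕ)) (θ : ℕ → FTerm Sig ar) : Set (ℕ →₀ ℕ) :=
  { B | ∃ G : PSG Sig ar S θ, G.res = B }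

/-- The single-binding substitution `{x/t}`. -/
def sbind (x : ℕ) (t : FTerm Sig ar) : ℕ → FTerm Sig ar :=
  fun v => if v = x then t else FTerm.var v

/-- `θ⁻¹(v)`: the ω-sharing group mapping each variable `w` to the number of
occurrences of `v` in `θ(w)` (as a plain function). -/
def invSub (θ : ℕ → FTerm Sig ar) (v : ℕ) : ℕ → ℕ := fun w => FTerm.occ v (θ w)

/-- Restriction `M|_U` of a multiset of variables to a finite set `U`. -/
noncomputable def restr (U : Finset ℕ) (f : ℕ → ℕ) : ℕ →₀ ℕ :=
  Finsupp.onFinset U (fun v => if v ∈ U then f v else 0)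
    (fun v h => by by_contra hc; simp [hc] at h)

/-- Projection `δ|_U` of a substitution on a set `U` of variables: it acts as
`δ` on `U` and as the identity elsewhere. -/
def projS (U : Finset ℕ) (δ : ℕ → FTerm Sig ar) : ℕ → FTerm Sig ar :=
  fun v => if v ∈ U then δ v else FTerm.var v

/-- The set of equations `Eq(θ) = { x = θ(x) : x ∈ dom(θ) }`. -/
def EqSet (θ : ℕ → FTerm Sig ar) : Set (FTerm Sig ar × FTerm Sig ar) :=
  { p | ∃ x ∈ domS θ, p = (FTerm.var x, θ x) }

/-- `η` is a unifier of the set of equations `E`. -/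
def Unifies (η : ℕ → FTerm Sig ar) (E : Set (FTerm Sig ar × FTerm Sig ar)) : Prop :=
  ∀ p ∈ E, FTerm.subst η p.1 = FTerm.subst η p.2

/-- `η` is a most general unifier of the set of equations `E`: it is a unifier
and every unifier factors through it. -/
def IsMGU (η : ℕ → FTerm Sig ar) (E : Set (FTerm Sig ar × FTerm Sig ar)) : Prop :=
  Unifies η E ∧ ∀ τ : ℕ → FTerm Sig ar, Unifies τ E →
    ∃ τ' : ℕ → FTerm Sig ar, ∀ x, τ x = FTerm.subst τ' (η x)

/-!
Give every node `n` of the sharing graph a fresh variable `z n`. For `u ∈ U \ dom θ`, `δ u` is a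
flat term with one argument `z n` for each of the `label n u` copies of `u` in each node `n`. For
`u ∈ U ∩ dom θ`, `δ u` is `θ u` with every occurrence of a variable `v` replaced by such a flat
term, whose argument for a copy of `v` in a node `m` is `z` of the source of the edge of layer `u`
assigned to that copy; the in-degree condition makes this assignment a bijection, and the
out-degree condition then gives `δ⁻¹(z n)|_U = label n` in both cases. So `δ⁻¹(z n)|_U` is the
label of `n` when that lies in `S` and is empty when it is a singleton `{{v}}` with `v ∉ U`.

A unifier of `Eq(δ|_U) ∪ Eq(θ)` identifies `z (src e)` with `z (tgt e)` along every edge `e` of a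
`U`-layer, and identifies the sources of two such edges into a common singleton node. The
singleton nodes are leaves (`v ∈ dom θ`, no in-edges, one out-edge) or hubs (`v ∈ rng θ`, no
out-edges), so by connectivity all the `z n` with `label n ∈ S` are identified with a single
variable `w`. The mgu `η` is `θ` followed by the substitution sending them to `w` and each other
variable `v` of `U` or of a binding `θ x`, `x ∈ U`, to a flat term with `res G v` copies of `w`.
Counting the edges of a layer `x` by sources and by targets gives
`res G x = ∑ r, occ r (θ x) * res G r`, whence `η⁻¹(w)|_V = res G`.
If no node has its label in `S`, the graph is a single hub `v₀` with its leaves and `w = v₀`.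
-/

namespace FTerm

def varsF : FTerm Sig ar → Finset ℕ
  | var v => {v}
  | app _ ts => Finset.univ.biUnion fun i => varsF (ts i)

lemma occ_var (v w : ℕ) : occ v (var w : FTerm Sig ar) = if w = v then 1 else 0 := rfl

lemma occ_ne_zero_iff_mem_varsF {v : ℕ} {t : FTerm Sig ar} : occ v t ≠ 0 ↔ v ∈ varsF t := by
  induction t with
  | var w => simp [occ, varsF, eq_comm]
  | app f ts ih => simp [occ, varsF, ih]

lemma occ_eq_zero_of_notMem_varsF {v : ℕ} {t : FTerm Sig ar} (h : v ∉ varsF t) :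
    occ v t = 0 :=
  not_not.mp (mt occ_ne_zero_iff_mem_varsF.mp h)

lemma coe_varsF (t : FTerm Sig ar) : (varsF t : Set ℕ) = varsT t := by
  ext v
  exact occ_ne_zero_iff_mem_varsF.symm

lemma subst_congr {σ σ' : ℕ → FTerm Sig ar} {t : FTerm Sig ar}
    (h : ∀ v ∈ varsF t, σ v = σ' v) : subst σ t = subst σ' t := by
  induction t with
  | var v => exact h v (by simp [varsF])
  | app f ts ih =>
      simp only [subst]
      congr 1
      funext i
      exact ih i fun v hv => h v (by simp only [varsF, Finset.mem_biUnion]; exact ⟨i, by simp, hv⟩)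

lemma subst_subst (τ σ : ℕ → FTerm Sig ar) (t : FTerm Sig ar) :
    subst τ (subst σ t) = subst (fun v => subst τ (σ v)) t := by
  induction t with
  | var v => rfl
  | app f ts ih =>
      simp only [subst]
      congr 1
      funext i
      exact ih i

lemma sum_varsF_app {M : Type*} [AddCommMonoid M] (f : Sig) (ts : Fin (ar f) → FTerm Sig ar)
    (F : ℕ → ℕ → M) (hF : ∀ u, F u 0 = 0) :
    ∑ i, ∑ u ∈ varsF (ts i), F u (occ u (ts i))
      = ∑ u ∈ varsF (app f ts), ∑ i, F u (occ u (ts i)) := by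
  rw [← Finset.sum_comm]
  refine Finset.sum_congr rfl fun i _ => Finset.sum_subset ?_ fun u _ hu => ?_
  · intro u hu
    simp only [varsF, Finset.mem_biUnion]
    exact ⟨i, by simp, hu⟩
  · rw [occ_eq_zero_of_notMem_varsF hu, hF]

lemma occ_subst (v : ℕ) (σ : ℕ → FTerm Sig ar) (t : FTerm Sig ar) :
    occ v (subst σ t) = ∑ u ∈ varsF t, occ u t * occ v (σ u) := by
  induction t with
  | var w => simp [subst, varsF, occ]
  | app f ts ih =>
      simp only [subst, occ, ih]
      rw [sum_varsF_app f ts (fun u n => n * occ v (σ u)) (by simp)]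
      simp only [Finset.sum_mul]

section Flat

variable (hsig : ∀ k : ℕ, ∃ f : Sig, ar f = k)

/-- The flat term `f_k(a_0, …, a_{k-1})` built with a chosen symbol of arity `k`. -/
noncomputable def mk (k : ℕ) (a : Fin k → FTerm Sig ar) : FTerm Sig ar :=
  app (hsig k).choose fun i => a (Fin.cast (hsig k).choose_spec i)

lemma mk_ne_var (k : ℕ) (a : Fin k → FTerm Sig ar) (v : ℕ) : mk hsig k a ≠ var v := by
  simp [mk]

lemma subst_mk (τ : ℕ → FTerm Sig ar) (k : ℕ) (a : Fin k → FTerm Sig ar) :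
    subst τ (mk hsig k a) = mk hsig k fun i => subst τ (a i) := rfl

lemma occ_mk (v k : ℕ) (a : Fin k → FTerm Sig ar) :
    occ v (mk hsig k a) = ∑ i, occ v (a i) :=
  Fintype.sum_equiv (finCongr (hsig k).choose_spec) _ _ fun _ => rfl

lemma occ_mk_var (y k : ℕ) (h : Fin k → ℕ) :
    occ y (mk hsig k fun i => var (h i) : FTerm Sig ar) = Nat.card {i // h i = y} := by
  rw [occ_mk, Nat.card_eq_fintype_card, Fintype.card_subtype, Finset.card_filter]
  rfl

lemma mk_injective (k : ℕ) : Function.Injective (mk hsig k : (Fin k → FTerm Sig ar) → _) := by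
  intro a b h
  funext j
  simpa using congrFun (eq_of_heq (app.inj h).2) (Fin.cast (hsig k).choose_spec.symm j)

end Flat

/-- The variable occurrences of a term as (path, variable) pairs; a path lists argument indices. -/
def occList : FTerm Sig ar → List (List ℕ × ℕ)
  | var v => [([], v)]
  | app f ts => (List.finRange (ar f)).flatMap
      fun i => (occList (ts i)).map fun qv => (i.val :: qv.1, qv.2)

/-- Replace the variable occurrence at each path `q` of a term by `g q`. -/
def mapOcc : (List ℕ → FTerm Sig ar) → FTerm Sig ar → FTerm Sig ar
  | g, var _ => g []
  | g, app f ts => app f fun i => mapOcc (fun q => g (i.val :: q)) (ts i)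

lemma mem_occList_app {f : Sig} {ts : Fin (ar f) → FTerm Sig ar} {qv : List ℕ × ℕ} :
    qv ∈ occList (app f ts) ↔ ∃ i, ∃ qv' ∈ occList (ts i), (i.val :: qv'.1, qv'.2) = qv := by
  simp [occList]

lemma subst_mapOcc (τ : ℕ → FTerm Sig ar) (g : List ℕ → FTerm Sig ar) (t : FTerm Sig ar) :
    subst τ (mapOcc g t) = mapOcc (fun q => subst τ (g q)) t := by
  induction t generalizing g with
  | var v => rfl
  | app f ts ih =>
      simp only [mapOcc, subst]
      congr 1
      funext i
      exact ih i _

lemma occ_mapOcc (u : ℕ) (g : List ℕ → FTerm Sig ar) (t : FTerm Sig ar) :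
    occ u (mapOcc g t) = ((occList t).map fun qv => occ u (g qv.1)).sum := by
  induction t generalizing g with
  | var v => simp [mapOcc, occList]
  | app f ts ih =>
      simp only [mapOcc, occ, ih, occList, List.flatMap_def, List.map_flatten, List.sum_flatten,
        List.map_map]
      rw [← Fin.sum_univ_def]
      simp only [Function.comp_def, List.map_map]

lemma sum_occList_map (F : ℕ → ℕ) (t : FTerm Sig ar) :
    ((occList t).map fun qv => F qv.2).sum = ∑ u ∈ varsF t, occ u t * F u := by
  induction t with
  | var v => simp [occList, varsF, occ]
  | app f ts ih =>
      simp only [occList, List.flatMap_def, List.map_flatten, List.sum_flatten, List.map_map]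
      rw [← Fin.sum_univ_def]
      simp only [Function.comp_def, List.map_map, ih]
      rw [sum_varsF_app f ts (fun u n => n * F u) (by simp)]
      simp only [occ, Finset.sum_mul]

lemma subst_eq_of_subst_mapOcc_eq {τ : ℕ → FTerm Sig ar} {g : List ℕ → FTerm Sig ar}
    {t : FTerm Sig ar} (h : subst τ (mapOcc g t) = subst τ t) :
    ∀ qv ∈ occList t, subst τ (g qv.1) = τ qv.2 := by
  induction t generalizing g with
  | var v => simpa [occList, mapOcc, subst] using h
  | app f ts ih =>
      intro qv hqv
      obtain ⟨i, qv', hqv', rfl⟩ := mem_occList_app.mp hqv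
      exact ih i (congrFun (eq_of_heq (app.inj h).2) i) qv' hqv'

lemma mapOcc_eq_subst {σ : ℕ → FTerm Sig ar} {g : List ℕ → FTerm Sig ar} {t : FTerm Sig ar}
    (h : ∀ qv ∈ occList t, g qv.1 = σ qv.2) : mapOcc g t = subst σ t := by
  induction t generalizing g with
  | var v => simpa [occList, mapOcc, subst] using h
  | app f ts ih =>
      simp only [mapOcc, subst]
      congr 1
      funext i
      exact ih i fun qv hqv => h _ (mem_occList_app.mpr ⟨i, qv, hqv, rfl⟩)

lemma mapOcc_ne_var {g : List ℕ → FTerm Sig ar} {t : FTerm Sig ar} {y : ℕ}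
    (hg : ∀ qv ∈ occList t, g qv.1 ≠ var y) : mapOcc g t ≠ var y := by
  cases t with
  | var v => simpa [occList, mapOcc] using hg
  | app f ts => simp [mapOcc]

lemma nodup_map_fst_occList (t : FTerm Sig ar) : ((occList t).map Prod.fst).Nodup := by
  induction t with
  | var v => simp [occList]
  | app f ts ih =>
      rw [occList, List.map_flatMap, List.nodup_flatMap]
      refine ⟨fun i _ => ?_, (List.nodup_finRange _).imp fun {i j} hij => ?_⟩
      · rw [List.map_map, show Prod.fst ∘ (fun qv : List ℕ × ℕ => (i.val :: qv.1, qv.2))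
          = List.cons i.val ∘ Prod.fst from rfl, ← List.map_map]
        exact (ih i).map List.cons_injective
      · simp only [Function.onFun, List.disjoint_left, List.map_map, List.mem_map]
        rintro _ ⟨a, _, rfl⟩ ⟨b, _, hb⟩
        exact hij (Fin.ext (List.cons.inj hb).1.symm)

lemma snd_mem_varsF_of_mem_occList {t : FTerm Sig ar} {qv : List ℕ × ℕ}
    (h : qv ∈ occList t) : qv.2 ∈ varsF t := by
  induction t generalizing qv with
  | var v => simp_all [occList, varsF]
  | app f ts ih =>
      obtain ⟨i, qv', hqv', rfl⟩ := mem_occList_app.mp h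
      simp only [varsF, Finset.mem_biUnion]
      exact ⟨i, by simp, ih i hqv'⟩

lemma exists_mem_occList_of_mem_varsF {t : FTerm Sig ar} {v : ℕ} (h : v ∈ varsF t) :
    ∃ q, (q, v) ∈ occList t := by
  induction t with
  | var w => simp_all [occList, varsF]
  | app f ts ih =>
      simp only [varsF, Finset.mem_biUnion] at h
      obtain ⟨i, -, hi⟩ := h
      obtain ⟨q, hq⟩ := ih i hi
      exact ⟨i.val :: q, mem_occList_app.mpr ⟨i, (q, v), hq, rfl⟩⟩

end FTerm

lemma chi_var (A : ℕ →₀ ℕ) (x : ℕ) : chi A (FTerm.var x : FTerm Sig ar) = A x := by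
  unfold chi
  rw [Finset.sum_eq_single x (fun b _ hb => by simp [FTerm.occ, Ne.symm hb])
    (fun hx => by simp [Finsupp.notMem_support_iff.mp hx])]
  simp [FTerm.occ]

lemma chi_eq_sum_varsF (A : ℕ →₀ ℕ) (t : FTerm Sig ar) :
    chi A t = ∑ v ∈ FTerm.varsF t, A v * FTerm.occ v t := by
  unfold chi
  rw [Finset.sum_subset (Finset.subset_union_left (s₂ := FTerm.varsF t))
      fun v _ hv => by rw [Finsupp.notMem_support_iff.mp hv, zero_mul],
    ← Finset.sum_subset (Finset.subset_union_right (s₁ := A.support))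
      fun v _ hv => by rw [FTerm.occ_eq_zero_of_notMem_varsF hv, mul_zero]]

lemma chi_single (v : ℕ) (t : FTerm Sig ar) : chi (Finsupp.single v 1) t = FTerm.occ v t := by
  simp [chi]

lemma notMem_domS_of_mem_rngS {θ : ℕ → FTerm Sig ar} (hidem : Idem θ) {v : ℕ}
    (h : v ∈ rngS θ) : v ∉ domS θ :=
  fun hd => (Set.eq_empty_iff_forall_notMem.mp hidem) v ⟨hd, h⟩

lemma mem_rngS_of_mem_varsF {θ : ℕ → FTerm Sig ar} {x v : ℕ} (hx : x ∈ domS θ)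
    (hv : v ∈ FTerm.varsF (θ x)) : v ∈ rngS θ :=
  Set.mem_biUnion hx (by rwa [← FTerm.coe_varsF])

lemma occ_eq_zero_of_mem_domS {θ : ℕ → FTerm Sig ar} (hidem : Idem θ) {x y : ℕ}
    (hx : x ∈ domS θ) (hy : y ∈ domS θ) : FTerm.occ x (θ y) = 0 :=
  FTerm.occ_eq_zero_of_notMem_varsF fun h =>
    notMem_domS_of_mem_rngS hidem (mem_rngS_of_mem_varsF hy h) hx

lemma finite_varsS {θ : ℕ → FTerm Sig ar} (hfin : (domS θ).Finite) : (varsS θ).Finite :=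
  hfin.union <| hfin.biUnion fun x _ => by
    rw [← FTerm.coe_varsF]
    exact (FTerm.varsF (θ x)).finite_toSet

lemma eq_of_single_one_pos {v y : ℕ} (h : 0 < (Finsupp.single v 1 : ℕ →₀ ℕ) y) : y = v := by
  by_contra hne
  rw [Finsupp.single_eq_of_ne hne] at h
  exact lt_irrefl 0 h

lemma Nat.sum_card_subtype_and_eq {E N : Type*} [Finite E] [Fintype N] (Q : E → Prop)
    (f : E → N) : ∑ m, Nat.card {e : E // Q e ∧ f e = m} = Nat.card {e : E // Q e} := by
  rw [← Nat.card_sigma]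
  exact Nat.card_congr
    { toFun := fun s => ⟨s.2.1, s.2.2.1⟩
      invFun := fun e => ⟨f e.1, e.1, e.2, rfl⟩
      left_inv := by rintro ⟨m, e, hQ, rfl⟩; rfl
      right_inv := fun _ => rfl }

lemma Nat.card_subtype_sigma {I : Type*} [Fintype I] (β : I → Type*) [∀ i, Finite (β i)]
    (P : (Σ i, β i) → Prop) :
    Nat.card {s : Σ i, β i // P s} = ∑ i, Nat.card {b : β i // P ⟨i, b⟩} := by
  rw [← Nat.card_sigma]
  exact Nat.card_congr
    { toFun := fun s => ⟨s.1.1, s.1.2, s.2⟩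
      invFun := fun t => ⟨⟨t.1, t.2.1⟩, t.2.2⟩
      left_inv := fun _ => rfl
      right_inv := fun _ => rfl }

lemma restr_apply (U : Finset ℕ) (f : ℕ → ℕ) (v : ℕ) :
    restr U f v = if v ∈ U then f v else 0 := rfl

lemma restr_eq_zero {U : Finset ℕ} {f : ℕ → ℕ} (h : ∀ v ∈ U, f v = 0) : restr U f = 0 := by
  ext v
  rw [restr_apply]
  split_ifs with hv
  exacts [h v hv, rfl]

lemma restr_eq_self {U : Finset ℕ} {A : ℕ →₀ ℕ} (h : ∀ v ∈ A.support, v ∈ U) :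
    restr U A = A := by
  ext v
  rw [restr_apply]
  split_ifs with hv
  · rfl
  · exact (Finsupp.notMem_support_iff.mp (mt (h v) hv)).symm

namespace PSG

variable {S : Set (ℕ →₀ ℕ)} {θ : ℕ → FTerm Sig ar} (G : PSG Sig ar S θ)

lemma res_apply (v : ℕ) : G.res v = ∑ n, G.label n v := by
  simp [res, Finsupp.finsetSum_apply]

lemma card_out {x : ℕ} (hx : x ∈ domS θ) (n : G.N) :
    Nat.card {e : G.E // G.layer e = x ∧ G.src e = n} = G.label n x := by
  rw [G.out_deg n x hx, chi_var]

lemma label_src_layer_pos (e : G.E) : 0 < G.label (G.src e) (G.layer e) := by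
  rw [← G.card_out (G.layer_mem e)]
  exact Finite.card_pos_iff.mpr ⟨⟨e, rfl, rfl⟩⟩

lemma chi_label_tgt_pos (e : G.E) : 0 < chi (G.label (G.tgt e)) (θ (G.layer e)) := by
  rw [← G.in_deg _ _ (G.layer_mem e)]
  exact Finite.card_pos_iff.mpr ⟨⟨e, rfl, rfl⟩⟩

/-- Counting the edges of layer `x` by their sources and by their targets. -/
lemma res_apply_of_mem_domS {x : ℕ} (hx : x ∈ domS θ) :
    G.res x = ∑ r ∈ FTerm.varsF (θ x), FTerm.occ r (θ x) * G.res r := by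
  calc G.res x = ∑ n, Nat.card {e : G.E // G.layer e = x ∧ G.src e = n} := by
        simp only [G.card_out hx, res_apply]
    _ = ∑ n, Nat.card {e : G.E // G.layer e = x ∧ G.tgt e = n} := by
        rw [Nat.sum_card_subtype_and_eq, Nat.sum_card_subtype_and_eq]
    _ = ∑ n, ∑ r ∈ FTerm.varsF (θ x), G.label n r * FTerm.occ r (θ x) := by
        simp only [G.in_deg _ x hx, chi_eq_sum_varsF]
    _ = ∑ r ∈ FTerm.varsF (θ x), FTerm.occ r (θ x) * G.res r := by
        rw [Finset.sum_comm]
        simp only [res_apply, Finset.mul_sum, mul_comm]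

section SingletonLabels

variable {G} {n : G.N} {v : ℕ}

lemma layer_eq_of_src_eq (hlab : G.label n = Finsupp.single v 1) {e : G.E}
    (he : G.src e = n) : G.layer e = v :=
  eq_of_single_one_pos (hlab ▸ he ▸ G.label_src_layer_pos e)

lemma src_ne_of_notMem_domS (hlab : G.label n = Finsupp.single v 1) (hv : v ∉ domS θ)
    (e : G.E) : G.src e ≠ n :=
  fun he => hv (layer_eq_of_src_eq hlab he ▸ G.layer_mem e)

lemma tgt_ne_of_mem_domS (hlab : G.label n = Finsupp.single v 1) (hidem : Idem θ)
    (hv : v ∈ domS θ) (e : G.E) : G.tgt e ≠ n := by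
  intro he
  have := G.chi_label_tgt_pos e
  rw [he, hlab, chi_single, occ_eq_zero_of_mem_domS hidem hv (G.layer_mem e)] at this
  exact lt_irrefl 0 this

lemma eq_of_src_eq_of_src_eq (hlab : G.label n = Finsupp.single v 1) (hv : v ∈ domS θ)
    {e e' : G.E} (he : G.src e = n) (he' : G.src e' = n) : e = e' := by
  have hcard : Nat.card {e'' : G.E // G.layer e'' = v ∧ G.src e'' = n} = 1 := by
    rw [G.card_out hv, hlab, Finsupp.single_eq_same]
  have := (Nat.card_eq_one_iff_unique.mp hcard).1.elim
    ⟨e, layer_eq_of_src_eq hlab he, he⟩ ⟨e', layer_eq_of_src_eq hlab he', he'⟩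
  exact congrArg Subtype.val this

end SingletonLabels

end PSG

/-- The data of the theorem, with `S'` unfolded in the type of the sharing graph. -/
structure Setting (Sig : Type) (ar : Sig → ℕ) where
  hsig : ∀ k : ℕ, ∃ f : Sig, ar f = k
  U : Finset ℕ
  S : Set (ℕ →₀ ℕ)
  zero_mem : (0 : ℕ →₀ ℕ) ∈ S
  mem_U_of_mem_support : ∀ B ∈ S, ∀ v ∈ (B : ℕ →₀ ℕ).support, v ∈ U
  θ : ℕ → FTerm Sig ar
  finite_domS : (domS θ).Finite
  idem : Idem θ
  G : PSG Sig ar (S ∪ { A | ∃ v ∈ varsS θ \ ↑U, A = Finsupp.single v 1 }) θ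

namespace Setting

variable (C : Setting Sig ar)

def IsInner (n : C.G.N) : Prop := ∀ v ∈ (C.G.label n).support, v ∈ C.U

variable {C}

lemma mem_U_of_isInner {n : C.G.N} (h : C.IsInner n) {v : ℕ} (hv : 0 < C.G.label n v) :
    v ∈ C.U :=
  h v (Finsupp.mem_support_iff.mpr hv.ne')

lemma label_mem_S_of_isInner {n : C.G.N} (h : C.IsInner n) : C.G.label n ∈ C.S := by
  rcases C.G.label_mem n with hS | ⟨v, hv, hlab⟩
  · exact hS
  · exact absurd (h v (by simp [hlab])) hv.2

lemma exists_label_eq_single {n : C.G.N} (h : ¬ C.IsInner n) :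
    ∃ v ∈ varsS C.θ, v ∉ C.U ∧ C.G.label n = Finsupp.single v 1 := by
  rcases C.G.label_mem n with hS | ⟨v, hv, hlab⟩
  · exact absurd (C.mem_U_of_mem_support _ hS) h
  · exact ⟨v, hv.1, hv.2, hlab⟩

lemma isInner_of_label_pos {n : C.G.N} {u : ℕ} (h : 0 < C.G.label n u) (hu : u ∈ C.U) :
    C.IsInner n := by
  by_contra hn
  obtain ⟨v, -, hvU, hlab⟩ := exists_label_eq_single hn
  exact hvU (eq_of_single_one_pos (hlab ▸ h) ▸ hu)

lemma isInner_src_iff (e : C.G.E) : C.IsInner (C.G.src e) ↔ C.G.layer e ∈ C.U :=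
  ⟨fun h => mem_U_of_isInner h (C.G.label_src_layer_pos e),
    isInner_of_label_pos (C.G.label_src_layer_pos e)⟩

lemma res_eq_zero {y : ℕ} (hU : y ∉ C.U) (hθ : y ∉ varsS C.θ) : C.G.res y = 0 := by
  rw [PSG.res_apply]
  refine Finset.sum_eq_zero fun n _ => ?_
  by_cases hn : C.IsInner n
  · exact Nat.eq_zero_of_not_pos fun h => hU (mem_U_of_isInner hn h)
  · obtain ⟨v, hv, -, hlab⟩ := exists_label_eq_single hn
    rw [hlab]
    exact Finsupp.single_eq_of_ne fun h => hθ (h ▸ hv)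

variable (C)

noncomputable def avoid : Finset ℕ :=
  ((Set.finite_union.mpr ⟨C.U.finite_toSet, finite_varsS C.finite_domS⟩).toFinset)

noncomputable def z (n : C.G.N) : ℕ := C.avoid.sup id + 1 + Fintype.equivFin C.G.N n

lemma z_injective : Function.Injective C.z := fun a b h =>
  (Fintype.equivFin C.G.N).injective (Fin.ext (by unfold z at h; omega))

lemma z_notMem_avoid (n : C.G.N) : C.z n ∉ C.avoid := fun h => by
  have := Finset.le_sup (f := id) h
  simp only [id, z] at this
  omega

lemma z_notMem_U (n : C.G.N) : C.z n ∉ C.U := fun h =>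
  C.z_notMem_avoid n (by simp [avoid, h])

lemma z_notMem_varsS (n : C.G.N) : C.z n ∉ varsS C.θ := fun h =>
  C.z_notMem_avoid n (by simp [avoid, h])

lemma z_notMem_domS (n : C.G.N) : C.z n ∉ domS C.θ := fun h =>
  C.z_notMem_varsS n (Or.inl h)

lemma z_notMem_rngS (n : C.G.N) : C.z n ∉ rngS C.θ := fun h =>
  C.z_notMem_varsS n (Or.inr h)

abbrev Occ (x : ℕ) : Type := Fin (FTerm.occList (C.θ x)).length

def occPath (x : ℕ) (o : C.Occ x) : List ℕ := (FTerm.occList (C.θ x))[o].1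

def occVar (x : ℕ) (o : C.Occ x) : ℕ := (FTerm.occList (C.θ x))[o].2

lemma occPath_injective (x : ℕ) : Function.Injective (C.occPath x) := fun o o' h =>
  Fin.ext <| ((FTerm.nodup_map_fst_occList (C.θ x)).getElem_inj_iff (hi := by simp)
    (hj := by simp)).mp (by simpa [occPath] using h)

lemma occVar_mem_varsF {x : ℕ} (o : C.Occ x) : C.occVar x o ∈ FTerm.varsF (C.θ x) :=
  FTerm.snd_mem_varsF_of_mem_occList (List.getElem_mem _)

lemma exists_occVar_eq {x v : ℕ} (h : v ∈ FTerm.varsF (C.θ x)) : ∃ o, C.occVar x o = v := by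
  obtain ⟨q, hq⟩ := FTerm.exists_mem_occList_of_mem_varsF h
  obtain ⟨o, ho⟩ := List.getElem_of_mem hq
  exact ⟨⟨o, ho.1⟩, by simp [occVar, ho.2]⟩

lemma sum_occ (x : ℕ) (F : ℕ → ℕ) :
    ∑ o : C.Occ x, F (C.occVar x o) = ∑ u ∈ FTerm.varsF (C.θ x), FTerm.occ u (C.θ x) * F u := by
  rw [← FTerm.sum_occList_map, ← Fin.sum_univ_fun_getElem]
  rfl

/-- Slot `⟨o, j⟩` of node `m` in layer `x`: the `j`-th copy of the occurrence `o` in `θ x`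
of a variable `v`, there being `label m v` of them. -/
abbrev Slot (x : ℕ) (m : C.G.N) : Type := Σ o : C.Occ x, Fin (C.G.label m (C.occVar x o))

abbrev InEdge (x : ℕ) (m : C.G.N) : Type := {e : C.G.E // C.G.layer e = x ∧ C.G.tgt e = m}

lemma card_slot (x : ℕ) (m : C.G.N) : Nat.card (C.Slot x m) = chi (C.G.label m) (C.θ x) := by
  rw [Nat.card_sigma]
  simp only [Nat.card_fin]
  rw [sum_occ, chi_eq_sum_varsF]
  simp only [mul_comm]

/-- In-degrees are counted by slots, so the in-edges can be distributed over the slots. -/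
noncomputable def slotEquiv {x : ℕ} (hx : x ∈ domS C.θ) (m : C.G.N) :
    C.Slot x m ≃ C.InEdge x m :=
  (Finite.card_eq.mp (by rw [card_slot, C.G.in_deg m x hx])).some

abbrev Pos (v : ℕ) : Type := Σ n : C.G.N, Fin (C.G.label n v)

noncomputable def posEquiv (v : ℕ) : Fin (C.G.res v) ≃ C.Pos v :=
  (Finite.card_eq.mp (by simp [PSG.res_apply])).some

noncomputable def slotSrc {x : ℕ} (hx : x ∈ domS C.θ) (m : C.G.N) (s : C.Slot x m) : C.G.N :=
  C.G.src (C.slotEquiv hx m s).1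

/-- The term substituted for the occurrence `o` of `v` in `θ x`: its arguments are indexed by the
positions of `v` in `res G`, and the one at position `⟨m, j⟩` is the fresh variable of the source
of the edge filling slot `⟨o, j⟩` of `m`. -/
noncomputable def occTerm {x : ℕ} (hx : x ∈ domS C.θ) (o : C.Occ x) : FTerm Sig ar :=
  FTerm.mk C.hsig (C.G.res (C.occVar x o)) fun i =>
    FTerm.var (C.z (C.slotSrc hx (C.posEquiv _ i).1 ⟨o, (C.posEquiv _ i).2⟩))

noncomputable def varTerm (u : ℕ) : FTerm Sig ar :=
  FTerm.mk C.hsig (C.G.res u) fun i => FTerm.var (C.z (C.posEquiv u i).1)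

noncomputable def domTerm {x : ℕ} (hx : x ∈ domS C.θ) : FTerm Sig ar :=
  FTerm.mapOcc (Function.extend (C.occPath x) (C.occTerm hx) fun _ => FTerm.var x) (C.θ x)

noncomputable def δ (u : ℕ) : FTerm Sig ar :=
  if u ∈ C.U then (if hx : u ∈ domS C.θ then C.domTerm hx else C.varTerm u) else FTerm.var u

variable {C}

lemma forall_mem_occList {x : ℕ} {P : List ℕ × ℕ → Prop} :
    (∀ qv ∈ FTerm.occList (C.θ x), P qv) ↔ ∀ o, P (C.occPath x o, C.occVar x o) := by
  refine ⟨fun h o => h _ (List.getElem_mem _), fun h qv hqv => ?_⟩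
  obtain ⟨o, ho, rfl⟩ := List.getElem_of_mem hqv
  exact h ⟨o, ho⟩

lemma extend_occPath {x : ℕ} (hx : x ∈ domS C.θ) (o : C.Occ x) :
    Function.extend (C.occPath x) (C.occTerm hx) (fun _ => FTerm.var x) (C.occPath x o)
      = C.occTerm hx o :=
  (C.occPath_injective x).extend_apply _ _ o

lemma occ_domTerm {x : ℕ} (hx : x ∈ domS C.θ) (y : ℕ) :
    FTerm.occ y (C.domTerm hx) = ∑ o, FTerm.occ y (C.occTerm hx o) := by
  rw [domTerm, FTerm.occ_mapOcc, ← Fin.sum_univ_fun_getElem]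
  exact Finset.sum_congr rfl fun o _ => congrArg _ (extend_occPath hx o)

lemma domTerm_ne_var {x : ℕ} (hx : x ∈ domS C.θ) (y : ℕ) : C.domTerm hx ≠ FTerm.var y :=
  FTerm.mapOcc_ne_var <| forall_mem_occList.mpr fun o => by
    rw [extend_occPath]
    exact FTerm.mk_ne_var _ _ _ _

lemma subst_domTerm {x : ℕ} (hx : x ∈ domS C.θ) {σ σ' : ℕ → FTerm Sig ar}
    (h : ∀ o, FTerm.subst σ (C.occTerm hx o) = σ' (C.occVar x o)) :
    FTerm.subst σ (C.domTerm hx) = FTerm.subst σ' (C.θ x) := by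
  rw [domTerm, FTerm.subst_mapOcc]
  exact FTerm.mapOcc_eq_subst <| forall_mem_occList.mpr fun o => by rw [extend_occPath, h]

lemma subst_occTerm_of_subst_domTerm {x : ℕ} (hx : x ∈ domS C.θ) {τ : ℕ → FTerm Sig ar}
    (h : FTerm.subst τ (C.domTerm hx) = FTerm.subst τ (C.θ x)) (o : C.Occ x) :
    FTerm.subst τ (C.occTerm hx o) = τ (C.occVar x o) := by
  have := forall_mem_occList.mp (FTerm.subst_eq_of_subst_mapOcc_eq h) o
  rwa [extend_occPath] at this

lemma occ_varTerm_z (u : ℕ) (n : C.G.N) : FTerm.occ (C.z n) (C.varTerm u) = C.G.label n u := by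
  rw [varTerm, FTerm.occ_mk_var]
  simp only [C.z_injective.eq_iff]
  rw [Nat.card_congr ((C.posEquiv u).subtypeEquiv (q := fun p => p.1 = n) fun _ => Iff.rfl),
    Nat.card_congr (Equiv.sigmaSubtype n), Nat.card_fin]

lemma occ_varTerm_eq_zero (u : ℕ) {y : ℕ} (hy : y ∉ Set.range C.z) :
    FTerm.occ y (C.varTerm u) = 0 := by
  rw [varTerm, FTerm.occ_mk_var, Nat.card_eq_zero]
  exact Or.inl ⟨fun i => hy ⟨_, i.2⟩⟩

lemma occ_occTerm_eq_zero {x : ℕ} (hx : x ∈ domS C.θ) (o : C.Occ x) {y : ℕ}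
    (hy : y ∉ Set.range C.z) : FTerm.occ y (C.occTerm hx o) = 0 := by
  rw [occTerm, FTerm.occ_mk_var, Nat.card_eq_zero]
  exact Or.inl ⟨fun i => hy ⟨_, i.2⟩⟩

lemma card_slotSrc_eq {x : ℕ} (hx : x ∈ domS C.θ) (m n : C.G.N) :
    Nat.card {s : C.Slot x m // C.slotSrc hx m s = n}
      = Nat.card {e : C.G.E // (C.G.layer e = x ∧ C.G.src e = n) ∧ C.G.tgt e = m} :=
  Nat.card_congr <| ((C.slotEquiv hx m).subtypeEquiv fun _ => Iff.rfl).trans <|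
    (Equiv.subtypeSubtypeEquivSubtypeInter _ (fun e => C.G.src e = n)).trans <|
      Equiv.subtypeEquivRight fun _ => by tauto

lemma sum_occ_occTerm_z {x : ℕ} (hx : x ∈ domS C.θ) (n : C.G.N) :
    ∑ o, FTerm.occ (C.z n) (C.occTerm hx o) = C.G.label n x := by
  have hocc : ∀ o, FTerm.occ (C.z n) (C.occTerm hx o)
      = ∑ m, Nat.card {j : Fin (C.G.label m (C.occVar x o)) // C.slotSrc hx m ⟨o, j⟩ = n} := by
    intro o
    rw [occTerm, FTerm.occ_mk_var]
    simp only [C.z_injective.eq_iff]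
    rw [Nat.card_congr ((C.posEquiv _).subtypeEquiv (q := fun p => C.slotSrc hx p.1 ⟨o, p.2⟩ = n)
      fun _ => Iff.rfl), Nat.card_subtype_sigma]
  simp only [hocc]
  rw [Finset.sum_comm]
  simp only [← Nat.card_subtype_sigma (fun o : C.Occ x => Fin (C.G.label _ (C.occVar x o)))
    (fun s => C.slotSrc hx _ s = n), card_slotSrc_eq]
  rw [Nat.sum_card_subtype_and_eq, C.G.card_out hx]

lemma δ_of_notMem {u : ℕ} (hu : u ∉ C.U) : C.δ u = FTerm.var u := if_neg hu

lemma δ_of_mem_domS {u : ℕ} (hu : u ∈ C.U) (hx : u ∈ domS C.θ) : C.δ u = C.domTerm hx := by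
  rw [δ, if_pos hu, dif_pos hx]

lemma δ_of_notMem_domS {u : ℕ} (hu : u ∈ C.U) (hx : u ∉ domS C.θ) : C.δ u = C.varTerm u := by
  rw [δ, if_pos hu, dif_neg hx]

lemma occ_δ_z {u : ℕ} (hu : u ∈ C.U) (n : C.G.N) : FTerm.occ (C.z n) (C.δ u) = C.G.label n u := by
  by_cases hx : u ∈ domS C.θ
  · rw [δ_of_mem_domS hu hx, occ_domTerm, sum_occ_occTerm_z]
  · rw [δ_of_notMem_domS hu hx, occ_varTerm_z]

lemma occ_δ_eq_zero {u y : ℕ} (hu : u ∈ C.U) (hy : y ∉ Set.range C.z) :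
    FTerm.occ y (C.δ u) = 0 := by
  by_cases hx : u ∈ domS C.θ
  · rw [δ_of_mem_domS hu hx, occ_domTerm]
    exact Finset.sum_eq_zero fun o _ => occ_occTerm_eq_zero hx o hy
  · rw [δ_of_notMem_domS hu hx, occ_varTerm_eq_zero u hy]

lemma δ_ne_var {u : ℕ} (hu : u ∈ C.U) (y : ℕ) : C.δ u ≠ FTerm.var y := by
  by_cases hx : u ∈ domS C.θ
  · rw [δ_of_mem_domS hu hx]
    exact domTerm_ne_var hx y
  · rw [δ_of_notMem_domS hu hx]
    exact FTerm.mk_ne_var _ _ _ _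

lemma domS_δ : domS C.δ = C.U := by
  ext u
  by_cases hu : u ∈ C.U
  · simpa [hu, domS] using δ_ne_var hu u
  · simp [hu, domS, δ_of_notMem hu]

lemma projS_δ : projS C.U C.δ = C.δ := by
  funext u
  by_cases hu : u ∈ C.U
  · rw [projS, if_pos hu]
  · rw [projS, if_neg hu, δ_of_notMem hu]

lemma rngS_δ_subset : rngS C.δ ⊆ Set.range C.z := by
  intro y hy
  obtain ⟨u, hu, hy⟩ := Set.mem_iUnion₂.mp hy
  rw [domS_δ] at hu
  by_contra hz
  exact hy (occ_δ_eq_zero hu hz)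

lemma finite_domS_δ : (domS C.δ).Finite := by
  rw [domS_δ]
  exact C.U.finite_toSet

lemma idem_δ : Idem C.δ := by
  refine Set.eq_empty_iff_forall_notMem.mpr fun y ⟨hd, hr⟩ => ?_
  obtain ⟨n, rfl⟩ := rngS_δ_subset hr
  rw [domS_δ] at hd
  exact C.z_notMem_U n hd

lemma varsS_δ_inter_subset : varsS C.δ ∩ varsS C.θ ⊆ C.U := by
  rintro y ⟨hd | hr, hθ⟩
  · rwa [domS_δ] at hd
  · obtain ⟨n, rfl⟩ := rngS_δ_subset hr
    exact absurd hθ (C.z_notMem_varsS n)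

lemma restr_invSub_δ_mem (y : ℕ) : restr C.U (invSub C.δ y) ∈ C.S := by
  by_cases hy : y ∈ Set.range C.z
  · obtain ⟨n, rfl⟩ := hy
    have h : restr C.U (invSub C.δ (C.z n)) = restr C.U (C.G.label n) := by
      ext v
      simp only [restr_apply, invSub]
      split_ifs with hv
      exacts [occ_δ_z hv n, rfl]
    rw [h]
    by_cases hn : C.IsInner n
    · rw [restr_eq_self hn]
      exact label_mem_S_of_isInner hn
    · obtain ⟨v, -, hvU, hlab⟩ := exists_label_eq_single hn
      rw [restr_eq_zero fun u hu => by
        rw [hlab]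
        exact Finsupp.single_eq_of_ne fun h => hvU (h ▸ hu)]
      exact C.zero_mem
  · rw [restr_eq_zero (f := invSub C.δ y) fun u hu => occ_δ_eq_zero hu hy]
    exact C.zero_mem

variable (C)

def OccursInUBinding (v : ℕ) : Prop := ∃ x ∈ domS C.θ, x ∈ C.U ∧ v ∈ FTerm.varsF (C.θ x)

noncomputable def etaBase (w v : ℕ) : FTerm Sig ar :=
  if ∃ n, C.IsInner n ∧ C.z n = v then FTerm.var w
  else if v ∈ C.U ∨ C.OccursInUBinding v then FTerm.mk C.hsig (C.G.res v) fun _ => FTerm.var w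
  else FTerm.var v

noncomputable def η (w y : ℕ) : FTerm Sig ar := FTerm.subst (C.etaBase w) (C.θ y)

variable {C}

lemma θ_of_notMem_domS {y : ℕ} (hy : y ∉ domS C.θ) : C.θ y = FTerm.var y := not_not.mp hy

lemma η_of_notMem_domS {w y : ℕ} (hy : y ∉ domS C.θ) : C.η w y = C.etaBase w y := by
  rw [η, θ_of_notMem_domS hy]
  rfl

lemma etaBase_z {w : ℕ} {n : C.G.N} (h : C.IsInner n) : C.etaBase w (C.z n) = FTerm.var w :=
  if_pos ⟨n, h, rfl⟩

lemma η_z {w : ℕ} {n : C.G.N} (h : C.IsInner n) : C.η w (C.z n) = FTerm.var w := by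
  rw [η_of_notMem_domS (C.z_notMem_domS n), etaBase_z h]

lemma etaBase_of_mem {w v : ℕ} (hv : v ∈ C.U ∨ C.OccursInUBinding v) (hz : v ∉ Set.range C.z) :
    C.etaBase w v = FTerm.mk C.hsig (C.G.res v) fun _ => FTerm.var w := by
  rw [etaBase, if_neg fun ⟨n, _, hn⟩ => hz ⟨n, hn⟩, if_pos hv]

lemma etaBase_of_notMem {w v : ℕ} (hz : ¬ ∃ n, C.IsInner n ∧ C.z n = v)
    (hv : ¬ (v ∈ C.U ∨ C.OccursInUBinding v)) : C.etaBase w v = FTerm.var v := by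
  rw [etaBase, if_neg hz, if_neg hv]

lemma occursInUBinding_occVar {x : ℕ} (hx : x ∈ domS C.θ) (hxU : x ∈ C.U) (o : C.Occ x) :
    C.OccursInUBinding (C.occVar x o) :=
  ⟨x, hx, hxU, C.occVar_mem_varsF o⟩

lemma mem_rngS_of_occursInUBinding {v : ℕ} (h : C.OccursInUBinding v) : v ∈ rngS C.θ := by
  obtain ⟨x, hx, -, hv⟩ := h
  exact mem_rngS_of_mem_varsF hx hv

lemma notMem_range_z_of_mem_U {v : ℕ} (h : v ∈ C.U) : v ∉ Set.range C.z :=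
  fun ⟨n, hn⟩ => C.z_notMem_U n (hn ▸ h)

lemma notMem_range_z_of_mem_rngS {v : ℕ} (h : v ∈ rngS C.θ) : v ∉ Set.range C.z :=
  fun ⟨n, hn⟩ => C.z_notMem_rngS n (hn ▸ h)

lemma isInner_slotSrc {x : ℕ} (hx : x ∈ domS C.θ) (hxU : x ∈ C.U) (m : C.G.N)
    (s : C.Slot x m) : C.IsInner (C.slotSrc hx m s) :=
  (isInner_src_iff _).mpr ((C.slotEquiv hx m s).2.1.symm ▸ hxU)

lemma isInner_posEquiv {u : ℕ} (hu : u ∈ C.U) (i : Fin (C.G.res u)) :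
    C.IsInner (C.posEquiv u i).1 :=
  isInner_of_label_pos (Fin.pos (C.posEquiv u i).2) hu

lemma unifies_η (w : ℕ) : Unifies (C.η w) (EqSet C.δ ∪ EqSet C.θ) := by
  rintro _ (⟨u, hu, rfl⟩ | ⟨x, hx, rfl⟩)
  · rw [domS_δ] at hu
    show C.η w u = FTerm.subst (C.η w) (C.δ u)
    by_cases hx : u ∈ domS C.θ
    · rw [δ_of_mem_domS hu hx, subst_domTerm hx fun o => ?_]
      · rfl
      rw [occTerm, FTerm.subst_mk, etaBase_of_mem (Or.inr (occursInUBinding_occVar hx hu o))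
        (notMem_range_z_of_mem_rngS (mem_rngS_of_mem_varsF hx (C.occVar_mem_varsF o)))]
      exact congrArg _ (funext fun i => η_z (isInner_slotSrc hx hu _ _))
    · rw [δ_of_notMem_domS hu hx, η_of_notMem_domS hx, etaBase_of_mem (Or.inl hu)
        (notMem_range_z_of_mem_U hu), varTerm, FTerm.subst_mk]
      exact congrArg _ (funext fun i => (η_z (isInner_posEquiv hu i)).symm)
  · refine FTerm.subst_congr fun v hv => (η_of_notMem_domS ?_).symm
    exact notMem_domS_of_mem_rngS C.idem (mem_rngS_of_mem_varsF hx hv)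

variable {τ : ℕ → FTerm Sig ar}

lemma unifier_δ (hτ : Unifies τ (EqSet C.δ ∪ EqSet C.θ)) {u : ℕ} (hu : u ∈ C.U) :
    τ u = FTerm.subst τ (C.δ u) :=
  hτ _ (Or.inl ⟨u, domS_δ ▸ hu, rfl⟩)

lemma unifier_θ (hτ : Unifies τ (EqSet C.δ ∪ EqSet C.θ)) {x : ℕ} (hx : x ∈ domS C.θ) :
    τ x = FTerm.subst τ (C.θ x) :=
  hτ _ (Or.inr ⟨x, hx, rfl⟩)

lemma unifier_varTerm (hτ : Unifies τ (EqSet C.δ ∪ EqSet C.θ)) {u : ℕ} (hu : u ∈ C.U)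
    (hx : u ∉ domS C.θ) :
    τ u = FTerm.mk C.hsig (C.G.res u) fun i => τ (C.z (C.posEquiv u i).1) := by
  rw [unifier_δ hτ hu, δ_of_notMem_domS hu hx]
  rfl

lemma unifier_occVar (hτ : Unifies τ (EqSet C.δ ∪ EqSet C.θ)) {x : ℕ} (hx : x ∈ domS C.θ)
    (hxU : x ∈ C.U) (o : C.Occ x) :
    τ (C.occVar x o) = FTerm.mk C.hsig (C.G.res (C.occVar x o)) fun i =>
      τ (C.z (C.slotSrc hx (C.posEquiv _ i).1 ⟨o, (C.posEquiv _ i).2⟩)) := by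
  have h : FTerm.subst τ (C.domTerm hx) = FTerm.subst τ (C.θ x) := by
    rw [← δ_of_mem_domS hxU hx, ← unifier_δ hτ hxU, unifier_θ hτ hx]
  exact (subst_occTerm_of_subst_domTerm hx h o).symm

/-- A unifier sends the variable `v` at the slot filled by a `U`-layer edge `e` to a flat term
whose argument at the position of that slot is the image of the fresh variable of `src e`. -/
lemma exists_unifier_eq_mk (hτ : Unifies τ (EqSet C.δ ∪ EqSet C.θ)) {e : C.G.E} {m : C.G.N}
    (hm : C.G.tgt e = m) (hU : C.G.layer e ∈ C.U) :
    ∃ v ∈ rngS C.θ, ∃ (j : Fin (C.G.label m v)) (a : Fin (C.G.res v) → FTerm Sig ar),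
      τ v = FTerm.mk C.hsig (C.G.res v) a ∧
        a ((C.posEquiv v).symm ⟨m, j⟩) = τ (C.z (C.G.src e)) := by
  have hx := C.G.layer_mem e
  obtain ⟨⟨o, j⟩, hs⟩ := (C.slotEquiv hx m).surjective ⟨e, rfl, hm⟩
  refine ⟨C.occVar _ o, mem_rngS_of_mem_varsF hx (C.occVar_mem_varsF o), j, _,
    unifier_occVar hτ hx hU o, ?_⟩
  rw [Equiv.apply_symm_apply, slotSrc, hs]

lemma unifier_z_src_eq_z_tgt (hτ : Unifies τ (EqSet C.δ ∪ EqSet C.θ)) {e : C.G.E}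
    (hU : C.G.layer e ∈ C.U) (ht : C.IsInner (C.G.tgt e)) :
    τ (C.z (C.G.src e)) = τ (C.z (C.G.tgt e)) := by
  obtain ⟨v, hv, j, a, hτv, ha⟩ := exists_unifier_eq_mk hτ rfl hU
  have hvU := mem_U_of_isInner ht (Fin.pos j)
  rw [unifier_varTerm hτ hvU (notMem_domS_of_mem_rngS C.idem hv)] at hτv
  rw [← ha, ← FTerm.mk_injective C.hsig _ hτv]
  simp only [Equiv.apply_symm_apply]

lemma unifier_z_src_eq_z_src (hτ : Unifies τ (EqSet C.δ ∪ EqSet C.θ)) {e e' : C.G.E}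
    (hU : C.G.layer e ∈ C.U) (hU' : C.G.layer e' ∈ C.U) (htgt : C.G.tgt e = C.G.tgt e')
    (ht : ¬ C.IsInner (C.G.tgt e)) : τ (C.z (C.G.src e)) = τ (C.z (C.G.src e')) := by
  obtain ⟨v₀, -, -, hlab⟩ := exists_label_eq_single ht
  obtain ⟨v, -, j, a, hτv, ha⟩ := exists_unifier_eq_mk hτ rfl hU
  obtain ⟨v', -, j', a', hτv', ha'⟩ := exists_unifier_eq_mk hτ htgt.symm hU'
  have hv : v = v₀ := eq_of_single_one_pos (hlab ▸ Fin.pos j)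
  have hv' : v' = v₀ := eq_of_single_one_pos (hlab ▸ Fin.pos j')
  subst v v'
  have hone : C.G.label (C.G.tgt e) v₀ = 1 := by rw [hlab, Finsupp.single_eq_same]
  have hj : j = j' := Fin.ext (by have := j.isLt; have := j'.isLt; omega)
  rw [← ha, ← ha', hj, FTerm.mk_injective C.hsig _ (hτv.symm.trans hτv')]

lemma notMem_domS_of_label_tgt_eq_single {e : C.G.E} {v : ℕ}
    (hlab : C.G.label (C.G.tgt e) = Finsupp.single v 1) : v ∉ domS C.θ :=
  fun hv => PSG.tgt_ne_of_mem_domS hlab C.idem hv e rfl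

lemma not_exists_src_eq_tgt (e : C.G.E) :
    ¬ ∃ e', C.G.src e' = C.G.tgt e ∧ ¬ C.IsInner (C.G.tgt e) := by
  rintro ⟨e', he', hn⟩
  obtain ⟨v, -, -, hlab⟩ := exists_label_eq_single hn
  exact PSG.src_ne_of_notMem_domS hlab (notMem_domS_of_label_tgt_eq_single hlab) e' he'

variable (C τ)

noncomputable def hubValue (m : C.G.N) : FTerm Sig ar :=
  if C.IsInner m then τ (C.z m)
  else if h : ∃ e, C.G.tgt e = m ∧ C.G.layer e ∈ C.U then τ (C.z (C.G.src h.choose))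
  else FTerm.var 0

/-- A leaf (a node labelled `{{x}}` with `x ∈ dom θ`) takes the value of the target of its only
edge. -/
noncomputable def nodeValue (n : C.G.N) : FTerm Sig ar :=
  if h : ∃ e, C.G.src e = n ∧ ¬ C.IsInner n then C.hubValue τ (C.G.tgt h.choose)
  else C.hubValue τ n

variable {C τ}

lemma nodeValue_of_isInner {n : C.G.N} (h : C.IsInner n) : C.nodeValue τ n = τ (C.z n) := by
  rw [nodeValue, dif_neg fun ⟨_, _, hn⟩ => hn h, hubValue, if_pos h]

lemma nodeValue_tgt (e : C.G.E) : C.nodeValue τ (C.G.tgt e) = C.hubValue τ (C.G.tgt e) :=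
  dif_neg (not_exists_src_eq_tgt e)

lemma nodeValue_src_eq_nodeValue_tgt (hτ : Unifies τ (EqSet C.δ ∪ EqSet C.θ)) (e : C.G.E) :
    C.nodeValue τ (C.G.src e) = C.nodeValue τ (C.G.tgt e) := by
  rw [nodeValue_tgt]
  by_cases hU : C.G.layer e ∈ C.U
  · rw [nodeValue_of_isInner ((isInner_src_iff e).mpr hU), hubValue]
    split_ifs with ht h
    · exact unifier_z_src_eq_z_tgt hτ hU ht
    · exact unifier_z_src_eq_z_src hτ hU h.choose_spec.2 h.choose_spec.1.symm ht
    · exact absurd ⟨e, rfl, hU⟩ h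
  · have hs : ¬ C.IsInner (C.G.src e) := mt (isInner_src_iff e).mp hU
    obtain ⟨x, -, -, hlab⟩ := exists_label_eq_single hs
    have hx : x ∈ domS C.θ := PSG.layer_eq_of_src_eq hlab rfl ▸ C.G.layer_mem e
    have h : ∃ e', C.G.src e' = C.G.src e ∧ ¬ C.IsInner (C.G.src e) := ⟨e, rfl, hs⟩
    rw [nodeValue, dif_pos h, PSG.eq_of_src_eq_of_src_eq hlab hx h.choose_spec.1 rfl]

lemma unifier_z_eq_z (hτ : Unifies τ (EqSet C.δ ∪ EqSet C.θ)) {a b : C.G.N}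
    (ha : C.IsInner a) (hb : C.IsInner b) : τ (C.z a) = τ (C.z b) := by
  rw [← nodeValue_of_isInner (τ := τ) ha, ← nodeValue_of_isInner (τ := τ) hb]
  clear hb
  induction C.G.conn a b with
  | refl => rfl
  | tail _ hadj ih =>
      obtain ⟨e, ⟨rfl, rfl⟩ | ⟨rfl, rfl⟩⟩ := hadj
      · exact ih.trans (nodeValue_src_eq_nodeValue_tgt hτ e)
      · exact ih.trans (nodeValue_src_eq_nodeValue_tgt hτ e).symm

variable (C)

/-- The conditions on a variable `w` under which `η w` is an idempotent mgu with
`(η w)⁻¹(w)|_V = res G`. -/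
structure IsCollapse (w : ℕ) : Prop where
  notMem_domS : w ∉ domS C.θ
  etaBase_self : C.etaBase w w = FTerm.var w
  unifier_z : ∀ τ, Unifies τ (EqSet C.δ ∪ EqSet C.θ) → ∀ n, C.IsInner n → τ (C.z n) = τ w
  res_apply : ∀ v, v ∉ C.U → ¬ C.OccursInUBinding v → v ∉ domS C.θ →
    (¬ ∃ n, C.IsInner n ∧ C.z n = v) → C.G.res v = if v = w then 1 else 0

variable {C} {w : ℕ}

lemma unifier_eq_subst_etaBase (hw : C.IsCollapse w)
    (hτ : Unifies τ (EqSet C.δ ∪ EqSet C.θ)) {v : ℕ} (hv : v ∉ domS C.θ) :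
    τ v = FTerm.subst τ (C.etaBase w v) := by
  unfold etaBase
  split_ifs with hz hUO
  · obtain ⟨n, hn, rfl⟩ := hz
    exact hw.unifier_z τ hτ n hn
  · rw [FTerm.subst_mk]
    rcases hUO with hvU | ⟨x, hx, hxU, hvx⟩
    · rw [unifier_varTerm hτ hvU hv]
      exact congrArg _ (funext fun i => hw.unifier_z τ hτ _ (isInner_posEquiv hvU i))
    · obtain ⟨o, rfl⟩ := C.exists_occVar_eq hvx
      rw [unifier_occVar hτ hx hxU o]
      exact congrArg _ (funext fun i => hw.unifier_z τ hτ _ (isInner_slotSrc hx hxU _ _))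
  · rfl

lemma unifier_eq_subst_η (hw : C.IsCollapse w)
    (hτ : Unifies τ (EqSet C.δ ∪ EqSet C.θ)) (y : ℕ) : τ y = FTerm.subst τ (C.η w y) := by
  by_cases hy : y ∈ domS C.θ
  · rw [η, FTerm.subst_subst, unifier_θ hτ hy]
    exact FTerm.subst_congr fun v hv => unifier_eq_subst_etaBase hw hτ
      (notMem_domS_of_mem_rngS C.idem (mem_rngS_of_mem_varsF hy hv))
  · rw [η_of_notMem_domS hy]
    exact unifier_eq_subst_etaBase hw hτ hy

lemma isMGU_η (hw : C.IsCollapse w) : IsMGU (C.η w) (EqSet C.δ ∪ EqSet C.θ) :=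
  ⟨C.unifies_η w, fun _ hτ => ⟨_, unifier_eq_subst_η hw hτ⟩⟩

lemma occ_etaBase_self (hw : C.IsCollapse w) {v : ℕ} (hv : v ∉ domS C.θ)
    (hz : v ∉ Set.range C.z) : FTerm.occ w (C.etaBase w v) = C.G.res v := by
  have hz' : ¬ ∃ n, C.IsInner n ∧ C.z n = v := fun ⟨n, _, hn⟩ => hz ⟨n, hn⟩
  by_cases hUO : v ∈ C.U ∨ C.OccursInUBinding v
  · simp [etaBase_of_mem hUO hz, FTerm.occ_mk, FTerm.occ_var]
  · rw [not_or] at hUO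
    rw [etaBase_of_notMem hz' (not_or.mpr hUO), FTerm.occ_var, hw.res_apply v hUO.1 hUO.2 hv hz']

lemma occ_η_self (hw : C.IsCollapse w) {y : ℕ} (hy : y ∈ C.U ∨ y ∈ varsS C.θ) :
    FTerm.occ w (C.η w y) = C.G.res y := by
  by_cases hyd : y ∈ domS C.θ
  · rw [η, FTerm.occ_subst, C.G.res_apply_of_mem_domS hyd]
    refine Finset.sum_congr rfl fun r hr => ?_
    have hrr := mem_rngS_of_mem_varsF hyd hr
    rw [occ_etaBase_self hw (notMem_domS_of_mem_rngS C.idem hrr) (notMem_range_z_of_mem_rngS hrr)]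
  · rw [η_of_notMem_domS hyd]
    refine occ_etaBase_self hw hyd fun ⟨n, hn⟩ => ?_
    rcases hy with hy | hy
    · exact C.z_notMem_U n (hn ▸ hy)
    · exact C.z_notMem_varsS n (hn ▸ hy)

lemma restr_invSub_η (hw : C.IsCollapse w) {V : Finset ℕ} (hV : (V : Set ℕ) = ↑C.U ∪ varsS C.θ) :
    restr V (invSub (C.η w) w) = C.G.res := by
  ext y
  have hyV : y ∈ V ↔ y ∈ C.U ∨ y ∈ varsS C.θ := by simpa using Set.ext_iff.mp hV y
  rw [restr_apply]
  split_ifs with hy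
  · exact occ_η_self hw (hyV.mp hy)
  · rw [not_iff_not.mpr hyV, not_or] at hy
    exact (res_eq_zero hy.1 hy.2).symm

lemma η_eq_var_of_occ_etaBase (hw : C.IsCollapse w) {v t : ℕ} (hv : v ∉ domS C.θ)
    (h : FTerm.occ t (C.etaBase w v) ≠ 0) : C.η w t = FTerm.var t := by
  unfold etaBase at h
  split_ifs at h with hz hUO
  · rw [FTerm.occ_var, ite_ne_right_iff] at h
    rw [← h.1, η_of_notMem_domS hw.notMem_domS, hw.etaBase_self]
  · rw [FTerm.occ_mk] at h
    obtain ⟨i, -, hi⟩ := Finset.exists_ne_zero_of_sum_ne_zero h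
    rw [FTerm.occ_var, ite_ne_right_iff] at hi
    rw [← hi.1, η_of_notMem_domS hw.notMem_domS, hw.etaBase_self]
  · rw [FTerm.occ_var, ite_ne_right_iff] at h
    rw [← h.1, η_of_notMem_domS hv, etaBase_of_notMem hz hUO]

lemma idem_η (hw : C.IsCollapse w) : Idem (C.η w) := by
  refine Set.eq_empty_iff_forall_notMem.mpr fun t ⟨hd, hr⟩ => hd ?_
  obtain ⟨y, -, hy⟩ := Set.mem_iUnion₂.mp hr
  replace hy : FTerm.occ t (FTerm.subst (C.etaBase w) (C.θ y)) ≠ 0 := hy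
  rw [FTerm.occ_subst] at hy
  obtain ⟨v, hv, hne⟩ := Finset.exists_ne_zero_of_sum_ne_zero hy
  have hvd : v ∉ domS C.θ := by
    by_cases hyd : y ∈ domS C.θ
    · exact notMem_domS_of_mem_rngS C.idem (mem_rngS_of_mem_varsF hyd hv)
    · rw [θ_of_notMem_domS hyd] at hv
      exact (Finset.mem_singleton.mp hv).symm ▸ hyd
  exact η_eq_var_of_occ_etaBase hw hvd (right_ne_zero_of_mul hne)

lemma finite_domS_η (w : ℕ) : (domS (C.η w)).Finite := by
  refine ((finite_varsS C.finite_domS).union ((C.U.finite_toSet).union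
    (Set.finite_range C.z))).subset fun y hy => ?_
  by_contra hc
  simp only [Set.mem_union, Finset.mem_coe, not_or] at hc
  obtain ⟨hθ, hU, hz⟩ := hc
  refine hy ?_
  rw [η_of_notMem_domS fun h => hθ (Or.inl h), etaBase_of_notMem (fun ⟨n, _, hn⟩ => hz ⟨n, hn⟩)]
  rintro (h | h)
  exacts [hU h, hθ (Or.inr (mem_rngS_of_occursInUBinding h))]

variable (C)

def IsLeafOf (b m : C.G.N) : Prop :=
  ¬ C.IsInner b ∧ ∃ x ∈ domS C.θ, C.G.label b = Finsupp.single x 1 ∧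
    ∀ e, C.G.src e = b → C.G.tgt e = m

variable {C}

/-- Without in-edges from `U`-layers, the neighbours of a hub `m` are leaves, so by connectivity
the graph consists of `m` and its leaves. -/
lemma eq_or_isLeafOf {m : C.G.N} {v : ℕ} (hlab : C.G.label m = Finsupp.single v 1)
    (hv : v ∉ domS C.θ) (hno : ∀ e, C.G.tgt e = m → C.G.layer e ∉ C.U) (b : C.G.N) :
    b = m ∨ C.IsLeafOf b m := by
  induction C.G.conn m b with
  | refl => exact Or.inl rfl
  | tail _ hadj ih =>
      obtain ⟨e, ⟨hs, ht⟩ | ⟨hs, ht⟩⟩ := hadj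
      · rcases ih with rfl | ⟨-, x, hx, hlabb, hout⟩
        · exact absurd hs (PSG.src_ne_of_notMem_domS hlab hv e)
        · exact Or.inl (ht ▸ hout e hs)
      · rcases ih with rfl | ⟨-, x, hx, hlabb, -⟩
        · have hc : ¬ C.IsInner _ := mt (isInner_src_iff e).mp (hno e ht)
          obtain ⟨y, -, -, hlabc⟩ := exists_label_eq_single hc
          have hy : y ∈ domS C.θ := PSG.layer_eq_of_src_eq hlabc rfl ▸ C.G.layer_mem e
          refine Or.inr ⟨hs ▸ hc, y, hy, hs ▸ hlabc, fun e' he' => ?_⟩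
          rw [PSG.eq_of_src_eq_of_src_eq hlabc hy (he'.trans hs.symm) rfl, ht]
        · exact absurd ht (PSG.tgt_ne_of_mem_domS hlabb C.idem hx e)

lemma exists_layer_mem_of_isInner {n₀ : C.G.N} (hn₀ : C.IsInner n₀) {m : C.G.N} {v : ℕ}
    (hm : ¬ C.IsInner m) (hlab : C.G.label m = Finsupp.single v 1) (hv : v ∉ domS C.θ) :
    ∃ e, C.G.tgt e = m ∧ C.G.layer e ∈ C.U := by
  by_contra! hno
  rcases eq_or_isLeafOf hlab hv hno n₀ with rfl | ⟨hn, -⟩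
  exacts [hm hn₀, hn hn₀]

lemma occursInUBinding_iff {m : C.G.N} {v : ℕ} (hlab : C.G.label m = Finsupp.single v 1) :
    C.OccursInUBinding v ↔ ∃ e, C.G.tgt e = m ∧ C.G.layer e ∈ C.U := by
  refine ⟨fun ⟨x, hx, hxU, hvx⟩ => ?_, fun ⟨e, he, hU⟩ => ?_⟩
  · have hpos : 0 < Nat.card {e : C.G.E // C.G.layer e = x ∧ C.G.tgt e = m} := by
      rw [C.G.in_deg m x hx, hlab, chi_single]
      exact Nat.pos_of_ne_zero (FTerm.occ_ne_zero_iff_mem_varsF.mpr hvx)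
    obtain ⟨⟨e, hex, he⟩⟩ := Finite.card_pos_iff.mp hpos
    exact ⟨e, he, hex ▸ hxU⟩
  · have := C.G.chi_label_tgt_pos e
    rw [he, hlab, chi_single] at this
    exact ⟨_, C.G.layer_mem e, hU, FTerm.occ_ne_zero_iff_mem_varsF.mp this.ne'⟩

lemma res_eq_zero_of_isInner {n₀ : C.G.N} (hn₀ : C.IsInner n₀) {v : ℕ} (hvU : v ∉ C.U)
    (hvO : ¬ C.OccursInUBinding v) (hv : v ∉ domS C.θ) : C.G.res v = 0 := by
  rw [PSG.res_apply]
  refine Finset.sum_eq_zero fun m _ => Nat.eq_zero_of_not_pos fun hpos => ?_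
  have hm : ¬ C.IsInner m := fun h => hvU (mem_U_of_isInner h hpos)
  obtain ⟨v', -, -, hlab⟩ := exists_label_eq_single hm
  obtain rfl := eq_of_single_one_pos (hlab ▸ hpos)
  exact hvO ((occursInUBinding_iff hlab).mpr (exists_layer_mem_of_isInner hn₀ hm hlab hv))

lemma isCollapse_z {n₀ : C.G.N} (hn₀ : C.IsInner n₀) : C.IsCollapse (C.z n₀) where
  notMem_domS := C.z_notMem_domS n₀
  etaBase_self := etaBase_z hn₀
  unifier_z _ hτ _ hn := unifier_z_eq_z hτ hn hn₀
  res_apply v hvU hvO hv hz := by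
    rw [res_eq_zero_of_isInner hn₀ hvU hvO hv, if_neg fun h => hz ⟨n₀, hn₀, h.symm⟩]

lemma exists_label_eq_single_mem_rngS (hno : ∀ n, ¬ C.IsInner n) :
    ∃ m v, C.G.label m = Finsupp.single v 1 ∧ v ∈ rngS C.θ ∧ v ∉ C.U := by
  obtain ⟨n⟩ := C.G.nonemptyN
  obtain ⟨y, hy | hy, hyU, hlab⟩ := exists_label_eq_single (hno n)
  · have hpos : 0 < Nat.card {e : C.G.E // C.G.layer e = y ∧ C.G.src e = n} := by
      rw [C.G.card_out hy, hlab, Finsupp.single_eq_same]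
      exact one_pos
    obtain ⟨⟨e, -, -⟩⟩ := Finite.card_pos_iff.mp hpos
    obtain ⟨y', hy' | hy', hy'U, hlab'⟩ := exists_label_eq_single (hno (C.G.tgt e))
    · exact absurd hy' (notMem_domS_of_label_tgt_eq_single hlab')
    · exact ⟨_, y', hlab', hy', hy'U⟩
  · exact ⟨n, y, hlab, hy, hyU⟩

lemma eq_of_label_eq_single (hno : ∀ n, ¬ C.IsInner n) {m m' : C.G.N} {v v' : ℕ}
    (hlab : C.G.label m = Finsupp.single v 1) (hv : v ∉ domS C.θ)
    (hlab' : C.G.label m' = Finsupp.single v' 1) (hv' : v' ∉ domS C.θ) : m' = m := by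
  have hnoU : ∀ e, C.G.tgt e = m → C.G.layer e ∉ C.U :=
    fun e _ hU => hno _ ((isInner_src_iff e).mpr hU)
  refine (eq_or_isLeafOf hlab hv hnoU m').resolve_right fun ⟨_, x, hx, hlabx, _⟩ => hv' ?_
  rwa [Finsupp.single_left_injective one_ne_zero (hlab'.symm.trans hlabx)]

lemma res_apply_of_forall_not_isInner (hno : ∀ n, ¬ C.IsInner n) {m : C.G.N} {v : ℕ}
    (hlab : C.G.label m = Finsupp.single v 1) (hv : v ∉ domS C.θ) {v' : ℕ} (hv' : v' ∉ domS C.θ) :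
    C.G.res v' = if v' = v then 1 else 0 := by
  rw [PSG.res_apply, Finset.sum_eq_single_of_mem m (Finset.mem_univ m) fun n _ hn => ?_, hlab,
    Finsupp.single_apply]
  · exact if_congr eq_comm rfl rfl
  refine Nat.eq_zero_of_not_pos fun hpos => hn ?_
  obtain ⟨y, -, -, hlabn⟩ := exists_label_eq_single (hno n)
  obtain rfl := eq_of_single_one_pos (hlabn ▸ hpos)
  exact eq_of_label_eq_single hno hlab hv hlabn hv'

lemma exists_isCollapse_of_forall_not_isInner (hno : ∀ n, ¬ C.IsInner n) :
    ∃ w, C.IsCollapse w := by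
  obtain ⟨m, v, hlab, hv, hvU⟩ := exists_label_eq_single_mem_rngS hno
  have hvd := notMem_domS_of_mem_rngS C.idem hv
  have hvO : ¬ C.OccursInUBinding v := fun h => by
    obtain ⟨e, -, hU⟩ := (occursInUBinding_iff hlab).mp h
    exact hno _ ((isInner_src_iff e).mpr hU)
  exact ⟨v, ⟨hvd, etaBase_of_notMem (fun ⟨n, hn, _⟩ => hno n hn) (not_or.mpr ⟨hvU, hvO⟩),
    fun _ _ n hn => absurd hn (hno n),
    fun _ _ _ hv' _ => res_apply_of_forall_not_isInner hno hlab hvd hv'⟩⟩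

lemma exists_isCollapse : ∃ w, C.IsCollapse w := by
  by_cases h : ∃ n, C.IsInner n
  · obtain ⟨n, hn⟩ := h
    exact ⟨_, isCollapse_z hn⟩
  · exact exists_isCollapse_of_forall_not_isInner (not_exists.mp h)

end Setting

/-- Theorem 3 of the paper: optimality of parallel abstract
unification in the general case, where `θ` may have variables outside the set
`U` of variables of interest.  Here `V = U ∪ vars(θ)` and
`S' = S ∪ { {{v}} : v ∈ vars(θ)\U }`.  The signature is assumed to contain a
function symbol of each arity (as needed for the construction in the paper). -/
theorem mguP_optimal_general (Sig : Type) (ar : Sig → ℕ)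
    (hsig : ∀ k : ℕ, ∃ f : Sig, ar f = k)
    (U : Finset ℕ) (S : Set (ℕ →₀ ℕ))
    (hS0 : (0 : ℕ →₀ ℕ) ∈ S)
    (hSU : ∀ B ∈ S, ∀ v ∈ (B : ℕ →₀ ℕ).support, v ∈ U)
    (θ : ℕ → FTerm Sig ar) (hfin : (domS θ).Finite) (hidem : Idem θ)
    (V : Finset ℕ) (hV : (V : Set ℕ) = ↑U ∪ varsS θ)
    (S' : Set (ℕ →₀ ℕ))
    (hS' : S' = S ∪ { A | ∃ v ∈ varsS θ \ ↑U, A = Finsupp.single v 1 })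
    (B : ℕ →₀ ℕ) (hB : B ∈ mguP S' θ) :
    ∃ δ : ℕ → FTerm Sig ar,
      (domS δ).Finite ∧ Idem δ ∧
      varsS (projS U δ) ∩ varsS θ ⊆ ↑U ∧
      (∀ v : ℕ, restr U (invSub δ v) ∈ S) ∧
      ∃ η : ℕ → FTerm Sig ar,
        (domS η).Finite ∧ Idem η ∧
        IsMGU η (EqSet (projS U δ) ∪ EqSet θ) ∧
        ∃ w : ℕ, restr V (invSub η w) = B := by
  subst hS'
  obtain ⟨G, rfl⟩ := hB
  let C : Setting Sig ar := ⟨hsig, U, S, hS0, hSU, θ, hfin, hidem, G⟩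
  have hproj : projS U C.δ = C.δ := Setting.projS_δ (C := C)
  obtain ⟨w, hw⟩ := C.exists_isCollapse
  refine ⟨C.δ, Setting.finite_domS_δ, Setting.idem_δ, ?_, Setting.restr_invSub_δ_mem (C := C),
    C.η w, C.finite_domS_η w, Setting.idem_η hw, ?_, w, ?_⟩
  · rw [hproj]
    exact Setting.varsS_δ_inter_subset
  · rw [hproj]
    exact Setting.isMGU_η hw
  · exact Setting.restr_invSub_η hw hV
end

section
/- Let x and y be distinct variables, let r be a binary function symbol of the signature (so that the multiset x¹y¹ is an ω-sharing group), and let S = { ∅, x¹y¹ } where ∅ is the empty multiset. Then mgu_p(S, {x/y}) = { ∅ } ∪ { xⁱyⁱ : i ≥ 1 }, where xⁱyⁱ denotes the multiset containing the variable x with multiplicity i and the variable y with multiplicity i. In particular, the parallel abstract unification of a finite set of ω-sharing groups with a single-binding substitution can be an infinite set of ω-sharing groups. -/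
open Classical

variable {Sig : Type} {ar : Sig → ℕ}

/-!
Every group of `S = {∅, x¹y¹}` is a multiple of `x¹y¹`, so the resultant of any parallel sharing
graph is `k • x¹y¹`, where `k` counts the nodes labelled `x¹y¹`. Conversely, for a single binding
`x/t` and a group `B` with `χ(B, x) = χ(B, t) > 0`, a directed cycle on `k ≥ 1` nodes labelled `B`,
with `χ(B, x)` parallel edges in the layer of `x` between consecutive nodes, is a parallel sharing
graph with resultant `k • B`; for `B = x¹y¹` and `t = y` both multiplicities are `1`. The empty
group is the resultant of a single edgeless node labelled `∅`.
-/

open FTerm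

lemma chi_zero_left (t : FTerm Sig ar) : chi 0 t = 0 := by
  simp [chi]

lemma chi_var_s6 (B : ℕ →₀ ℕ) (v : ℕ) : chi B (var v : FTerm Sig ar) = B v := by
  simp only [chi, occ, mul_ite, mul_one, mul_zero]
  rw [Finset.sum_ite_eq]
  exact ite_eq_left_iff.mpr fun h => (Finsupp.notMem_support_iff.mp h).symm

lemma sbind_self (x : ℕ) (t : FTerm Sig ar) : sbind x t x = t :=
  if_pos rfl

lemma domS_sbind {x : ℕ} {t : FTerm Sig ar} (ht : t ≠ var x) : domS (sbind x t) = {x} := by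
  ext v
  by_cases hv : v = x
  · subst hv
    simpa [domS, sbind_self] using ht
  · simp [domS, sbind, hv]

lemma Nat.card_subtype_fst_eq {α β : Type*} (a : α) :
    Nat.card {e : α × β // e.1 = a} = Nat.card β :=
  Nat.card_congr ⟨fun e => e.1.2, fun b => ⟨(a, b), rfl⟩, fun ⟨⟨_, _⟩, h⟩ => by subst h; rfl,
    fun _ => rfl⟩

lemma Fin.reflTransGen_of_add_one {m : ℕ} {r : Fin (m + 1) → Fin (m + 1) → Prop}
    (hsymm : ∀ a b, r a b → r b a) (hr : ∀ a, r a (a + 1)) (a b : Fin (m + 1)) :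
    Relation.ReflTransGen r a b := by
  have from_zero (c : Fin (m + 1)) : Relation.ReflTransGen r 0 c := by
    induction c using Fin.induction with
    | zero => exact .refl
    | succ j ih => exact ih.tail (by simpa using hr j.castSucc)
  have : Std.Symm r := ⟨hsymm⟩
  exact (Relation.ReflTransGen.stdSymm.symm _ _ (from_zero a)).trans (from_zero b)

namespace PSG

variable {S : Set (ℕ →₀ ℕ)} {θ : ℕ → FTerm Sig ar}

lemma res_eq_card_smul {B : ℕ →₀ ℕ} (hS : S ⊆ {0, B}) (G : PSG Sig ar S θ) :
    G.res = (Finset.univ.filter fun n => G.label n = B).card • B := by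
  have hlabel (n : G.N) : G.label n = if G.label n = B then B else 0 := by
    by_cases hB : G.label n = B
    · rw [if_pos hB, hB]
    · rw [if_neg hB]
      exact (hS (G.label_mem n)).resolve_right hB
  rw [res, Finset.sum_congr rfl fun n _ => hlabel n, Finset.sum_ite, Finset.sum_const,
    Finset.sum_const_zero, add_zero]

def singletonZero (h0 : 0 ∈ S) : PSG Sig ar S θ where
  N := Unit
  fintypeN := inferInstance
  nonemptyN := inferInstance
  E := Empty
  fintypeE := inferInstance
  layer := Empty.elim
  src := Empty.elim
  tgt := Empty.elim
  label _ := 0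
  label_mem _ := h0
  layer_mem e := e.elim
  out_deg _ _ _ := by simp [chi_zero_left]
  in_deg _ _ _ := by simp [chi_zero_left]
  conn _ _ := .refl

def cycle {x : ℕ} {t : FTerm Sig ar} (ht : t ≠ var x) {B : ℕ →₀ ℕ} (hB : B ∈ S)
    (hpos : 0 < B x) (hdeg : chi B t = B x) (m : ℕ) : PSG Sig ar S (sbind x t) where
  N := Fin (m + 1)
  fintypeN := inferInstance
  nonemptyN := inferInstance
  E := Fin (m + 1) × Fin (B x)
  fintypeE := inferInstance
  layer _ := x
  src e := e.1
  tgt e := e.1 + 1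
  label _ := B
  label_mem _ := hB
  layer_mem _ := by simp [domS_sbind ht]
  out_deg n z hz := by
    obtain rfl : z = x := by simpa [domS_sbind ht] using hz
    simp only [true_and]
    rw [Nat.card_subtype_fst_eq, chi_var_s6, Nat.card_eq_fintype_card, Fintype.card_fin]
  in_deg n z hz := by
    obtain rfl : z = x := by simpa [domS_sbind ht] using hz
    simp only [true_and, ← eq_sub_iff_add_eq]
    rw [Nat.card_subtype_fst_eq, sbind_self, hdeg, Nat.card_eq_fintype_card, Fintype.card_fin]
  conn := by
    refine Fin.reflTransGen_of_add_one (fun a b ⟨e, h⟩ => ⟨e, h.symm⟩) fun a => ?_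
    exact ⟨(a, ⟨0, hpos⟩), Or.inl ⟨rfl, rfl⟩⟩

end PSG

variable {S : Set (ℕ →₀ ℕ)}

lemma mguP_subset_range_nsmul {θ : ℕ → FTerm Sig ar} {B : ℕ →₀ ℕ} (hS : S ⊆ {0, B}) :
    mguP S θ ⊆ Set.range fun k : ℕ => k • B := by
  rintro _ ⟨G, rfl⟩
  exact ⟨_, (G.res_eq_card_smul hS).symm⟩

lemma zero_mem_mguP {θ : ℕ → FTerm Sig ar} (h0 : 0 ∈ S) : 0 ∈ mguP S θ :=
  ⟨.singletonZero h0, by simp [PSG.res, PSG.singletonZero]⟩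

lemma nsmul_mem_mguP_sbind {x : ℕ} {t : FTerm Sig ar} (ht : t ≠ var x) {B : ℕ →₀ ℕ}
    (hB : B ∈ S) (hpos : 0 < B x) (hdeg : chi B t = B x) {k : ℕ} (hk : 1 ≤ k) :
    k • B ∈ mguP S (sbind x t) := by
  obtain ⟨m, rfl⟩ := Nat.exists_eq_add_of_le' hk
  exact ⟨.cycle ht hB hpos hdeg m, by
    simp only [PSG.res, PSG.cycle, Finset.sum_const]
    exact congrArg (· • B) (Finset.card_fin _)⟩

theorem mguP_singleton_binding_infinite_general (Sig : Type) (ar : Sig → ℕ)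
    (x y : ℕ) (hxy : x ≠ y) :
    mguP ({0, Finsupp.single x 1 + Finsupp.single y 1} : Set (ℕ →₀ ℕ))
        (sbind x (FTerm.var y : FTerm Sig ar))
      = {0} ∪ { B : ℕ →₀ ℕ | ∃ i : ℕ, 1 ≤ i ∧
          B = Finsupp.single x i + Finsupp.single y i } := by
  set xy : ℕ →₀ ℕ := Finsupp.single x 1 + Finsupp.single y 1
  have hx : xy x = 1 := by simp [xy, hxy.symm]
  have hy : xy y = 1 := by simp [xy, hxy]
  have hsmul (k : ℕ) : k • xy = Finsupp.single x k + Finsupp.single y k := by simp [xy]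
  apply subset_antisymm
  · rintro _ hB
    obtain ⟨k, rfl⟩ := mguP_subset_range_nsmul subset_rfl hB
    rcases k.eq_zero_or_pos with rfl | hk
    · exact Or.inl (zero_smul ℕ xy)
    · exact Or.inr ⟨k, hk, hsmul k⟩
  · rintro _ (rfl | ⟨k, hk, rfl⟩)
    · exact zero_mem_mguP (Or.inl rfl)
    · rw [← hsmul]
      exact nsmul_mem_mguP_sbind (fun h => hxy (var.inj h).symm) (Or.inr rfl) (by omega)
        (by rw [chi_var_s6, hx, hy]) hk

/-- Example 6 of the paper: for distinct variables `x`, `y`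
(and a binary function symbol `r` in the signature), the parallel abstract
unification of the finite set `S = {∅, x¹y¹}` of ω-sharing groups with the
single-binding substitution `{x/y}` is the infinite set
`{∅} ∪ { xⁱyⁱ : i ≥ 1 }`. -/
theorem mguP_singleton_binding_infinite (Sig : Type) (ar : Sig → ℕ)
    (r : Sig) (hr : ar r = 2)
    (x y : ℕ) (hxy : x ≠ y) :
    mguP ({0, Finsupp.single x 1 + Finsupp.single y 1} : Set (ℕ →₀ ℕ))
        (sbind x (FTerm.var y : FTerm Sig ar))
      = {0} ∪ { B : ℕ →₀ ℕ | ∃ i : ℕ, 1 ≤ i ∧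
          B = Finsupp.single x i + Finsupp.single y i } :=
  mguP_singleton_binding_infinite_general Sig ar x y hxy
end
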